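/- Let p ≥ 1, ℓ ≥ 0, b₀ ≥ 1, w₀ ≥ 0 be integers, s₀ = b₀ + w₀ and δ = p/(p+ℓ). Let B_n be the number of black balls after n steps in the Young–Pólya urn of period p and parameter ℓ with initial composition (b₀, w₀), and let B_n* = (p^δ/(p+ℓ))·B_n/n^δ. Then for every integer r ≥ 1, lim_{n→∞} E[(B_n*)^r] = m_r, where m_r = (Γ(b₀+r)Γ(s₀)/(Γ(b₀)Γ(s₀+r))) · ∏_{j=0}^{ℓ−1} Γ((s₀+r+p+j)/(p+ℓ))/Γ((s₀+p+j)/(p+ℓ)). -/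

import Mathlib

/-!
Write `x⁽ʳ⁾ = x (x + 1) ⋯ (x + r - 1)` for the rising factorial. The moments `E[B_n⁽ʳ⁾]` are
computable exactly: one draw multiplies them by `(S_n + r) / S_n`, where `S_n` is the number of
balls, so `E[B_n⁽ʳ⁾] = b₀⁽ʳ⁾ ∏_{k<n} (S_k + r) / S_k`. Along a period the totals
`S_{pj+i} = s₀ + i + (p + ℓ) j` run through `p` arithmetic progressions of step `p + ℓ`, so
Euler's product formula for `Γ` shows that the product grows like `n^{δr}` times a ratio of
`Γ`-values, and the identity `∏_{i<q} Γ((x + r + i)/q) = x⁽ʳ⁾ q^{-r} ∏_{i<q} Γ((x + i)/q)` brings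
that constant to the form `m_r`. Power moments differ from rising factorial moments by
lower-order moments, which vanish after rescaling.
-/

open Real Filter Topology

/-- `urnMass p ℓ b₀ w₀ n b` is the probability that the Young–Pólya urn of period `p`
and parameter `ℓ` with initial composition `(b₀, w₀)` contains `b` black balls after `n`
steps (the total number of balls after `n` steps is `b₀ + w₀ + n + ℓ⌊n/p⌋`). -/
noncomputable def urnMass (p ℓ b₀ w₀ : ℕ) : ℕ → ℕ → ℝ
  | 0, b => if b = b₀ then 1 else 0
  | n + 1, b =>
    urnMass p ℓ b₀ w₀ n (b - 1) *
        (((b - 1 : ℕ) : ℝ) / ((b₀ + w₀ + n + ℓ * (n / p) : ℕ) : ℝ)) +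
      urnMass p ℓ b₀ w₀ n b *
        ((((b₀ + w₀ + n + ℓ * (n / p) : ℕ) : ℝ) - (b : ℝ)) / ((b₀ + w₀ + n + ℓ * (n / p) : ℕ) : ℝ))

open Polynomial

lemma ascPochhammer_eval_add_one_mul (r : ℕ) (x : ℝ) :
    x * (ascPochhammer ℝ r).eval (x + 1) = (ascPochhammer ℝ r).eval x * (x + r) := by
  rw [← ascPochhammer_succ_eval, ascPochhammer_succ_left, eval_mul, eval_X, eval_comp, eval_add,
    eval_X, eval_one]

lemma pow_le_ascPochhammer_eval {x : ℝ} (hx : 0 ≤ x) (r : ℕ) :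
    x ^ r ≤ (ascPochhammer ℝ r).eval x := by
  induction r with
  | zero => simp
  | succ r ih =>
    rw [pow_succ, ascPochhammer_succ_eval]
    exact mul_le_mul ih (by linarith [r.cast_nonneg (α := ℝ)]) hx
      ((pow_nonneg hx r).trans ih)

lemma ascPochhammer_eval_succ_le {x : ℝ} (hx : 0 ≤ x) (r : ℕ) :
    (ascPochhammer ℝ (r + 1)).eval x ≤
      x ^ (r + 1) + r * (r + 1) / 2 * (ascPochhammer ℝ r).eval x := by
  induction r with
  | zero => simp
  | succ r ih =>
    have hpos : 0 ≤ (ascPochhammer ℝ r).eval x := (pow_nonneg hx r).trans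
      (pow_le_ascPochhammer_eval hx r)
    have hstep : x * (ascPochhammer ℝ r).eval x ≤ (ascPochhammer ℝ (r + 1)).eval x := by
      rw [ascPochhammer_succ_eval]
      nlinarith [r.cast_nonneg (α := ℝ)]
    -- `x⁽ʳ⁺²⁾ - x ^ (r + 2) = x (x⁽ʳ⁺¹⁾ - x ^ (r + 1)) + (r + 1) x⁽ʳ⁺¹⁾`
    rw [ascPochhammer_succ_eval (r + 1), pow_succ]
    push_cast
    nlinarith [mul_le_mul_of_nonneg_left ih hx,
      mul_le_mul_of_nonneg_left hstep (by positivity : (0 : ℝ) ≤ r * (r + 1) / 2)]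

lemma Real.Gamma_add_nat {x : ℝ} (hx : 0 < x) (r : ℕ) :
    Real.Gamma (x + r) = (ascPochhammer ℝ r).eval x * Real.Gamma x := by
  induction r with
  | zero => simp
  | succ r ih =>
    rw [Nat.cast_succ, ← add_assoc, Real.Gamma_add_one (by positivity), ih,
      ascPochhammer_succ_eval]
    ring

lemma prod_Gamma_add_nat_div {x : ℝ} (hx : 0 < x) {q : ℕ} (hq : 0 < q) (r : ℕ) :
    ∏ i ∈ Finset.range q, Real.Gamma ((x + r + i) / q) =
      (ascPochhammer ℝ r).eval x / (q : ℝ) ^ r *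
        ∏ i ∈ Finset.range q, Real.Gamma ((x + i) / q) := by
  induction r with
  | zero => simp
  | succ r ih =>
    set f : ℕ → ℝ := fun k => Real.Gamma ((x + k) / q)
    have hf : ∀ r : ℕ, ∏ i ∈ Finset.range q, Real.Gamma ((x + r + i) / q) =
        ∏ i ∈ Finset.range q, f (r + i) := fun r => by simp only [f, Nat.cast_add, add_assoc]
    have hq' : (0 : ℝ) < q := by exact_mod_cast hq
    have hfr : 0 < f r := Real.Gamma_pos_of_pos (by positivity)
    -- raising every argument by `1/q` only changes the two ends of the chain `f r, …, f (r + q)`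
    have hshift : f r * ∏ i ∈ Finset.range q, f (r + 1 + i) =
        (∏ i ∈ Finset.range q, f (r + i)) * f (r + q) := by
      rw [← Finset.prod_range_succ, Finset.prod_range_succ']
      simp only [add_zero, add_assoc, add_comm 1, mul_comm]
    have hfq : f (r + q) = (x + r) / q * f r := by
      simp only [f, Nat.cast_add]
      rw [← Real.Gamma_add_one (by positivity)]
      congr 1
      field_simp
      ring
    have hstep : ∏ i ∈ Finset.range q, f (r + 1 + i) =
        (∏ i ∈ Finset.range q, f (r + i)) * ((x + r) / q) :=
      mul_left_cancel₀ hfr.ne' (by rw [hshift, hfq]; ring)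
    rw [hf, hstep, ← hf, ih, ascPochhammer_succ_eval, pow_succ]
    field_simp

lemma prod_Gamma_div_Gamma_eq {x : ℝ} (hx : 0 < x) {p ℓ : ℕ} (hq : 0 < p + ℓ) (r : ℕ) :
    ∏ i ∈ Finset.range p,
        Real.Gamma ((x + i) / ((p : ℝ) + ℓ)) / Real.Gamma ((x + i + r) / ((p : ℝ) + ℓ)) =
      ((p : ℝ) + ℓ) ^ r / (ascPochhammer ℝ r).eval x *
        ∏ j ∈ Finset.range ℓ, Real.Gamma ((x + r + p + j) / ((p : ℝ) + ℓ)) /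
          Real.Gamma ((x + p + j) / ((p : ℝ) + ℓ)) := by
  have htel := prod_Gamma_add_nat_div hx hq r
  simp only [Finset.prod_range_add, Nat.cast_add, ← add_assoc] at htel
  have hq' : (0 : ℝ) < p + ℓ := by exact_mod_cast hq
  have hprod : ∀ (n : ℕ) (a : ℝ), 0 ≤ a →
      0 < ∏ i ∈ Finset.range n, Real.Gamma ((x + a + i) / ((p : ℝ) + ℓ)) :=
    fun n a ha => Finset.prod_pos fun i _ => Real.Gamma_pos_of_pos (by positivity)
  have hA := hprod p 0 le_rfl
  have hB := hprod p r (by positivity)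
  have hA' := hprod ℓ p (by positivity)
  have hP := ascPochhammer_pos r x hx
  simp only [add_zero] at hA
  simp only [Finset.prod_div_distrib, add_right_comm x _ (r : ℝ)]
  rw [div_mul_eq_mul_div, eq_div_iff (by positivity)] at htel
  field_simp
  linear_combination -htel

lemma tendsto_prod_add_div_add_div_rpow {α β : ℝ} (hα : 0 < α) (hβ : 0 < β) :
    Tendsto (fun m : ℕ => (∏ j ∈ Finset.range m, (α + j) / (β + j)) / (m : ℝ) ^ (α - β))
      atTop (𝓝 (Real.Gamma β / Real.Gamma α)) := by
  have hlim := ((Real.GammaSeq_tendsto_Gamma β).div (Real.GammaSeq_tendsto_Gamma α)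
    (Real.Gamma_pos_of_pos hα).ne').mul
      (tendsto_add_mul_div_add_mul_atTop_nhds β α 1 one_ne_zero)
  rw [div_one, mul_one] at hlim
  refine hlim.congr' ?_
  filter_upwards [eventually_gt_atTop 0] with m hm
  have hm : (0 : ℝ) < m := by exact_mod_cast hm
  have hpow : (m : ℝ) ^ α = (m : ℝ) ^ β * (m : ℝ) ^ (α - β) := by
    rw [← Real.rpow_add hm, add_sub_cancel]
  have hα' : ∀ j : ℕ, 0 < α + j := fun j => by positivity
  have hβ' : ∀ j : ℕ, 0 < β + j := fun j => by positivity
  have hPα := Finset.prod_pos fun j (_ : j ∈ Finset.range m) => hα' j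
  have hPβ := Finset.prod_pos fun j (_ : j ∈ Finset.range m) => hβ' j
  have hαm := hα' m
  have hβm := hβ' m
  simp only [Pi.div_apply, Real.GammaSeq, Finset.prod_range_succ, Finset.prod_div_distrib, hpow,
    one_mul]
  field_simp

lemma tendsto_natCast_div_div_self {p : ℕ} (hp : 0 < p) :
    Tendsto (fun n : ℕ => ((n / p : ℕ) : ℝ) / n) atTop (𝓝 (1 / p)) := by
  have hp' : (0 : ℝ) < p := by exact_mod_cast hp
  have hfloor := ((tendsto_nat_floor_div_atTop (R := ℝ)).comp
    (tendsto_natCast_atTop_atTop.atTop_div_const hp')).mul_const (1 / (p : ℝ))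
  rw [one_mul] at hfloor
  refine hfloor.congr' ?_
  filter_upwards [eventually_gt_atTop 0] with n hn
  have hn : (0 : ℝ) < n := by exact_mod_cast hn
  simp only [Function.comp_apply, Nat.floor_div_eq_div]
  field_simp

lemma Monotone.tendsto_div_rpow_of_tendsto_mul {f : ℕ → ℝ} (hf : Monotone f) {p : ℕ}
    (hp : 0 < p) {e L : ℝ} (he : 0 ≤ e)
    (h : Tendsto (fun m : ℕ => f (p * m) / (m : ℝ) ^ e) atTop (𝓝 L)) :
    Tendsto (fun n : ℕ => f n / (n : ℝ) ^ e) atTop (𝓝 (L / (p : ℝ) ^ e)) := by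
  have hp' : (0 : ℝ) < p := by exact_mod_cast hp
  have hdiv := Nat.tendsto_div_const_atTop hp.ne'
  have hratio := tendsto_natCast_div_div_self hp
  have hratio_succ : Tendsto (fun n : ℕ => ((n / p + 1 : ℕ) : ℝ) / n) atTop (𝓝 (1 / p)) := by
    have := hratio.add tendsto_one_div_atTop_nhds_zero_nat
    rw [add_zero] at this
    refine this.congr fun n => ?_
    push_cast
    ring
  have hlimit : L / (p : ℝ) ^ e = L * (1 / (p : ℝ)) ^ e := by
    rw [Real.div_rpow zero_le_one hp'.le, Real.one_rpow, mul_one_div]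
  rw [hlimit]
  refine tendsto_of_tendsto_of_tendsto_of_le_of_le'
    ((h.comp hdiv).mul (hratio.rpow_const (Or.inr he)))
    ((h.comp ((tendsto_add_atTop_nat 1).comp hdiv)).mul (hratio_succ.rpow_const (Or.inr he)))
    ?_ ?_
  all_goals
    filter_upwards [eventually_ge_atTop p] with n hn
    have hm : 0 < n / p := Nat.div_pos hn hp
    simp only [Function.comp_apply]
    rw [Real.div_rpow (by positivity) (by positivity), div_mul_div_cancel₀ (by positivity)]
    gcongr
  · exact hf (Nat.mul_div_le n p)
  · exact hf (Nat.lt_mul_div_succ n hp).le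

lemma Finset.prod_range_mul_eq_prod_prod {M : Type*} [CommMonoid M] (f : ℕ → M) (p m : ℕ) :
    ∏ k ∈ Finset.range (p * m), f k =
      ∏ i ∈ Finset.range p, ∏ j ∈ Finset.range m, f (p * j + i) := by
  induction m with
  | zero => simp
  | succ m ih =>
    simp only [Nat.mul_succ, Finset.prod_range_add, ih, Finset.prod_range_succ,
      Finset.prod_mul_distrib]

def urnTotal (p ℓ s₀ n : ℕ) : ℕ := s₀ + n + ℓ * (n / p)

noncomputable def urnExpect (p ℓ b₀ w₀ n : ℕ) (f : ℕ → ℝ) : ℝ :=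
  ∑ b ∈ Finset.range (b₀ + n + 1), urnMass p ℓ b₀ w₀ n b * f b

noncomputable def urnGrowth (p ℓ s₀ r n : ℕ) : ℝ :=
  ∏ k ∈ Finset.range n, ((urnTotal p ℓ s₀ k : ℝ) + r) / urnTotal p ℓ s₀ k

section Growth

variable {p ℓ s₀ : ℕ}

lemma urnTotal_mul_add {i : ℕ} (hi : i < p) (j : ℕ) :
    urnTotal p ℓ s₀ (p * j + i) = s₀ + i + (p + ℓ) * j := by
  rw [urnTotal, Nat.mul_add_div (by omega), Nat.div_eq_of_lt hi]
  ring

lemma urnGrowth_succ (r n : ℕ) :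
    urnGrowth p ℓ s₀ r (n + 1) =
      urnGrowth p ℓ s₀ r n * (((urnTotal p ℓ s₀ n : ℝ) + r) / urnTotal p ℓ s₀ n) :=
  Finset.prod_range_succ _ _

lemma monotone_urnGrowth (hs : 0 < s₀) (r : ℕ) : Monotone (urnGrowth p ℓ s₀ r) := by
  refine monotone_nat_of_le_succ fun n => ?_
  have hS : (0 : ℝ) < urnTotal p ℓ s₀ n := by unfold urnTotal; positivity
  have hfactor : 1 ≤ ((urnTotal p ℓ s₀ n : ℝ) + r) / urnTotal p ℓ s₀ n :=
    (one_le_div hS).2 (le_add_of_nonneg_right r.cast_nonneg)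
  have hpos : 0 ≤ urnGrowth p ℓ s₀ r n :=
    Finset.prod_nonneg fun k _ => by positivity
  rw [urnGrowth_succ]
  exact le_mul_of_one_le_right hpos hfactor

lemma tendsto_urnGrowth_mul (hp : 0 < p) (hs : 0 < s₀) (r : ℕ) :
    Tendsto (fun m : ℕ => urnGrowth p ℓ s₀ r (p * m) / (m : ℝ) ^ ((p : ℝ) / (p + ℓ) * r))
      atTop
      (𝓝 (∏ i ∈ Finset.range p,
        Real.Gamma ((s₀ + i) / ((p : ℝ) + ℓ)) / Real.Gamma ((s₀ + i + r) / ((p : ℝ) + ℓ)))) := by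
  set q : ℝ := (p : ℝ) + ℓ
  have hq : 0 < q := by positivity
  have hblock := tendsto_finsetProd (Finset.range p) fun i _ =>
    tendsto_prod_add_div_add_div_rpow (α := (s₀ + i + r) / q) (β := (s₀ + i) / q)
      (by positivity) (by positivity)
  refine hblock.congr fun m => ?_
  have hfactor : ∀ i ∈ Finset.range p, ∀ j ∈ Finset.range m,
      ((s₀ + i + r) / q + j) / ((s₀ + i) / q + j) =
        ((urnTotal p ℓ s₀ (p * j + i) : ℝ) + r) / urnTotal p ℓ s₀ (p * j + i) := by
    intro i hi j _
    rw [urnTotal_mul_add (Finset.mem_range.1 hi)]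
    have hs' : (0 : ℝ) < s₀ := by exact_mod_cast hs
    field_simp
    push_cast
    ring
  have hexp : ∀ i : ℕ, ((s₀ : ℝ) + i + r) / q - (s₀ + i) / q = r / q := fun i => by ring
  simp only [hexp]
  rw [Finset.prod_div_distrib, Finset.prod_const, Finset.card_range,
    ← Real.rpow_mul_natCast m.cast_nonneg, Finset.prod_congr rfl fun i hi =>
      Finset.prod_congr rfl (hfactor i hi), urnGrowth, Finset.prod_range_mul_eq_prod_prod]
  congr 2
  ring

lemma tendsto_urnGrowth (hp : 0 < p) (hs : 0 < s₀) (r : ℕ) :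
    Tendsto (fun n : ℕ => urnGrowth p ℓ s₀ r n / (n : ℝ) ^ ((p : ℝ) / (p + ℓ) * r)) atTop
      (𝓝 ((∏ i ∈ Finset.range p,
        Real.Gamma ((s₀ + i) / ((p : ℝ) + ℓ)) / Real.Gamma ((s₀ + i + r) / ((p : ℝ) + ℓ))) /
          (p : ℝ) ^ ((p : ℝ) / (p + ℓ) * r))) :=
  (monotone_urnGrowth hs r).tendsto_div_rpow_of_tendsto_mul hp (by positivity)
    (tendsto_urnGrowth_mul hp hs r)

end Growth

section Urn

variable {p ℓ b₀ w₀ : ℕ}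

lemma urnMass_succ (n b : ℕ) :
    urnMass p ℓ b₀ w₀ (n + 1) b =
      urnMass p ℓ b₀ w₀ n (b - 1) * (((b - 1 : ℕ) : ℝ) / urnTotal p ℓ (b₀ + w₀) n) +
        urnMass p ℓ b₀ w₀ n b *
          (((urnTotal p ℓ (b₀ + w₀) n : ℝ) - b) / urnTotal p ℓ (b₀ + w₀) n) :=
  rfl

lemma urnMass_eq_zero_of_lt {n b : ℕ} (h : b₀ + n < b) : urnMass p ℓ b₀ w₀ n b = 0 := by
  induction n generalizing b with
  | zero => simp [urnMass]; omega
  | succ n ih => rw [urnMass_succ, ih (by omega), ih (by omega)]; simp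

lemma urnMass_nonneg (n b : ℕ) : 0 ≤ urnMass p ℓ b₀ w₀ n b := by
  induction n generalizing b with
  | zero => simp only [urnMass]; split_ifs <;> norm_num
  | succ n ih =>
    rw [urnMass_succ]
    rcases le_or_gt b (b₀ + n) with hb | hb
    · have hbS : (b : ℝ) ≤ urnTotal p ℓ (b₀ + w₀) n := by
        exact_mod_cast (show b ≤ urnTotal p ℓ (b₀ + w₀) n by unfold urnTotal; omega)
      have hprev := ih (b - 1)
      have hsame := ih b
      positivity
    · rw [urnMass_eq_zero_of_lt hb, zero_mul, add_zero]
      exact mul_nonneg (ih _) (by positivity)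

lemma tsum_urnMass_mul (n : ℕ) (f : ℕ → ℝ) :
    ∑' b, urnMass p ℓ b₀ w₀ n b * f b = urnExpect p ℓ b₀ w₀ n f :=
  tsum_eq_sum fun b hb => by
    rw [urnMass_eq_zero_of_lt (by simpa using hb), zero_mul]

lemma urnExpect_add (n : ℕ) (f g : ℕ → ℝ) :
    urnExpect p ℓ b₀ w₀ n (fun b => f b + g b) =
      urnExpect p ℓ b₀ w₀ n f + urnExpect p ℓ b₀ w₀ n g := by
  simp only [urnExpect, mul_add, Finset.sum_add_distrib]

lemma urnExpect_const_mul (n : ℕ) (c : ℝ) (f : ℕ → ℝ) :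
    urnExpect p ℓ b₀ w₀ n (fun b => c * f b) = c * urnExpect p ℓ b₀ w₀ n f := by
  simp only [urnExpect, Finset.mul_sum, mul_left_comm]

lemma urnExpect_mono (n : ℕ) {f g : ℕ → ℝ} (h : ∀ b, f b ≤ g b) :
    urnExpect p ℓ b₀ w₀ n f ≤ urnExpect p ℓ b₀ w₀ n g :=
  Finset.sum_le_sum fun b _ => mul_le_mul_of_nonneg_left (h b) (urnMass_nonneg n b)

lemma urnExpect_succ (n : ℕ) (f : ℕ → ℝ) :
    urnExpect p ℓ b₀ w₀ (n + 1) f =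
      urnExpect p ℓ b₀ w₀ n fun b =>
        (b * f (b + 1) + ((urnTotal p ℓ (b₀ + w₀) n : ℝ) - b) * f b) /
          urnTotal p ℓ (b₀ + w₀) n := by
  set S : ℝ := ((urnTotal p ℓ (b₀ + w₀) n : ℕ) : ℝ)
  have hdraw_black : ∑ b ∈ Finset.range (b₀ + n + 1 + 1),
      urnMass p ℓ b₀ w₀ n (b - 1) * (((b - 1 : ℕ) : ℝ) / S) * f b =
        ∑ b ∈ Finset.range (b₀ + n + 1), urnMass p ℓ b₀ w₀ n b * (b / S) * f (b + 1) := by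
    simp [Finset.sum_range_succ']
  have hdraw_white : ∑ b ∈ Finset.range (b₀ + n + 1 + 1),
      urnMass p ℓ b₀ w₀ n b * ((S - b) / S) * f b =
        ∑ b ∈ Finset.range (b₀ + n + 1), urnMass p ℓ b₀ w₀ n b * ((S - b) / S) * f b := by
    rw [Finset.sum_range_succ, urnMass_eq_zero_of_lt (by omega), zero_mul, zero_mul, add_zero]
  rw [urnExpect, ← add_assoc b₀ n 1]
  simp only [urnMass_succ, add_mul, Finset.sum_add_distrib]
  rw [hdraw_black, hdraw_white, urnExpect, ← Finset.sum_add_distrib]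
  refine Finset.sum_congr rfl fun b _ => ?_
  ring

lemma urnExpect_ascPochhammer (r n : ℕ) :
    urnExpect p ℓ b₀ w₀ n (fun b => (ascPochhammer ℝ r).eval (b : ℝ)) =
      (ascPochhammer ℝ r).eval (b₀ : ℝ) * urnGrowth p ℓ (b₀ + w₀) r n := by
  induction n with
  | zero => simp [urnExpect, urnMass, urnGrowth]
  | succ n ih =>
    have hstep : ∀ b : ℕ, ((b : ℝ) * (ascPochhammer ℝ r).eval ((b + 1 : ℕ) : ℝ) +
        ((urnTotal p ℓ (b₀ + w₀) n : ℝ) - b) * (ascPochhammer ℝ r).eval (b : ℝ)) /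
          urnTotal p ℓ (b₀ + w₀) n =
        ((urnTotal p ℓ (b₀ + w₀) n : ℝ) + r) / urnTotal p ℓ (b₀ + w₀) n *
          (ascPochhammer ℝ r).eval (b : ℝ) := fun b => by
      rw [Nat.cast_succ, ascPochhammer_eval_add_one_mul]
      ring
    rw [urnExpect_succ, funext hstep, urnExpect_const_mul, ih, urnGrowth_succ]
    ring

end Urn

section Moments

variable {p ℓ b₀ w₀ : ℕ}

lemma tendsto_urnExpect_pow {δ : ℝ} (hδ : 0 < δ) {L : ℕ → ℝ}
    (h : ∀ r : ℕ, Tendsto (fun n : ℕ => urnExpect p ℓ b₀ w₀ n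
      (fun b => (ascPochhammer ℝ r).eval (b : ℝ)) / (n : ℝ) ^ (δ * r)) atTop (𝓝 (L r)))
    (r : ℕ) :
    Tendsto (fun n : ℕ => urnExpect p ℓ b₀ w₀ n (fun b => (b : ℝ) ^ r) / (n : ℝ) ^ (δ * r))
      atTop (𝓝 (L r)) := by
  cases r with
  | zero => simpa using h 0
  | succ r =>
    have hlower_order : Tendsto (fun n : ℕ => urnExpect p ℓ b₀ w₀ n
        (fun b => (ascPochhammer ℝ r).eval (b : ℝ)) / (n : ℝ) ^ (δ * (r + 1 : ℕ)))
        atTop (𝓝 0) := by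
      refine ((h r).div_atTop ((tendsto_rpow_atTop hδ).comp tendsto_natCast_atTop_atTop)).congr
        fun n => ?_
      rw [Function.comp_apply, div_div, ← Real.rpow_add' n.cast_nonneg (by positivity)]
      push_cast
      ring_nf
    have hlower := (h (r + 1)).sub (hlower_order.const_mul ((r : ℝ) * (r + 1) / 2))
    rw [mul_zero, sub_zero] at hlower
    refine tendsto_of_tendsto_of_tendsto_of_le_of_le hlower (h (r + 1)) (fun n => ?_)
      fun n => ?_
    · have hbound := urnExpect_mono (p := p) (ℓ := ℓ) (b₀ := b₀) (w₀ := w₀) n fun b =>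
        ascPochhammer_eval_succ_le (Nat.cast_nonneg b) r
      rw [urnExpect_add, urnExpect_const_mul] at hbound
      rw [← mul_div_assoc, ← sub_div]
      gcongr
      linarith
    · exact div_le_div_of_nonneg_right (urnExpect_mono n fun b =>
        pow_le_ascPochhammer_eval (Nat.cast_nonneg b) _) (by positivity)

end Moments

theorem young_polya_urn_rescaled_moments_limit_general
    (p ℓ b₀ w₀ : ℕ) (hp : 1 ≤ p) (hb : 1 ≤ b₀) (r : ℕ) :
    Tendsto
      (fun n : ℕ => ∑' b : ℕ,
        urnMass p ℓ b₀ w₀ n b *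
          ((p : ℝ) ^ ((p : ℝ) / ((p : ℝ) + (ℓ : ℝ))) / ((p : ℝ) + (ℓ : ℝ)) * (b : ℝ) /
              (n : ℝ) ^ ((p : ℝ) / ((p : ℝ) + (ℓ : ℝ)))) ^ r)
      atTop
      (𝓝 (Real.Gamma ((b₀ : ℝ) + (r : ℝ)) * Real.Gamma ((b₀ + w₀ : ℕ) : ℝ) /
            (Real.Gamma (b₀ : ℝ) * Real.Gamma (((b₀ + w₀ : ℕ) : ℝ) + (r : ℝ))) *
          ∏ j ∈ Finset.range ℓ,
            Real.Gamma ((((b₀ + w₀ : ℕ) : ℝ) + (r : ℝ) + (p : ℝ) + (j : ℝ)) / ((p : ℝ) + (ℓ : ℝ))) /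
              Real.Gamma ((((b₀ + w₀ : ℕ) : ℝ) + (p : ℝ) + (j : ℝ)) / ((p : ℝ) + (ℓ : ℝ))))) := by
  set δ : ℝ := (p : ℝ) / ((p : ℝ) + ℓ)
  set c : ℝ := (p : ℝ) ^ δ / ((p : ℝ) + ℓ)
  have hs : 0 < b₀ + w₀ := by omega
  have hmoments := tendsto_urnExpect_pow (p := p) (ℓ := ℓ) (b₀ := b₀) (w₀ := w₀)
    (show 0 < δ by positivity) (fun r => by
      simp only [urnExpect_ascPochhammer, mul_div_assoc]
      exact (tendsto_urnGrowth hp hs r).const_mul _) r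
  have hrescale : ∀ n : ℕ, ∑' b : ℕ, urnMass p ℓ b₀ w₀ n b * (c * b / (n : ℝ) ^ δ) ^ r =
      c ^ r * (urnExpect p ℓ b₀ w₀ n (fun b => (b : ℝ) ^ r) / (n : ℝ) ^ (δ * r)) := fun n => by
    have hpointwise : (fun b : ℕ => (c * b / (n : ℝ) ^ δ) ^ r) =
        fun b : ℕ => c ^ r / ((n : ℝ) ^ δ) ^ r * (b : ℝ) ^ r := funext fun b => by ring
    rw [tsum_urnMass_mul, hpointwise, urnExpect_const_mul, Real.rpow_mul_natCast n.cast_nonneg]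
    ring
  simp only [hrescale]
  convert hmoments.const_mul (c ^ r) using 2
  have hs' : (0 : ℝ) < (b₀ + w₀ : ℕ) := by exact_mod_cast hs
  have hb' : (0 : ℝ) < b₀ := by exact_mod_cast hb
  rw [prod_Gamma_div_Gamma_eq hs' (by omega), Real.Gamma_add_nat hb', Real.Gamma_add_nat hs',
    div_pow, ← Real.rpow_mul_natCast (by positivity)]
  have hΓb := Real.Gamma_pos_of_pos hb'
  have hΓs := Real.Gamma_pos_of_pos hs'
  have hrising := ascPochhammer_pos r _ hs'
  field_simp
  rw [mul_div_assoc]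

/-- **Theorem (limit moments of the rescaled Young–Pólya urn).**
With `s₀ = b₀ + w₀`, `δ = p/(p+ℓ)` and `Bₙ* = (p^δ/(p+ℓ)) Bₙ/n^δ`, for every `r ≥ 1`,
`E[(Bₙ*)^r] → m_r = (Γ(b₀+r)Γ(s₀)/(Γ(b₀)Γ(s₀+r))) ∏_{j=0}^{ℓ-1}
Γ((s₀+r+p+j)/(p+ℓ))/Γ((s₀+p+j)/(p+ℓ))` as `n → ∞`. -/
theorem young_polya_urn_rescaled_moments_limit
    (p ℓ b₀ w₀ : ℕ) (hp : 1 ≤ p) (hb : 1 ≤ b₀) (r : ℕ) (hr : 1 ≤ r) :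
    Tendsto
      (fun n : ℕ => ∑' b : ℕ,
        urnMass p ℓ b₀ w₀ n b *
          ((p : ℝ) ^ ((p : ℝ) / ((p : ℝ) + (ℓ : ℝ))) / ((p : ℝ) + (ℓ : ℝ)) * (b : ℝ) /
              (n : ℝ) ^ ((p : ℝ) / ((p : ℝ) + (ℓ : ℝ)))) ^ r)
      atTop
      (𝓝 (Real.Gamma ((b₀ : ℝ) + (r : ℝ)) * Real.Gamma ((b₀ + w₀ : ℕ) : ℝ) /
            (Real.Gamma (b₀ : ℝ) * Real.Gamma (((b₀ + w₀ : ℕ) : ℝ) + (r : ℝ))) *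
          ∏ j ∈ Finset.range ℓ,
            Real.Gamma ((((b₀ + w₀ : ℕ) : ℝ) + (r : ℝ) + (p : ℝ) + (j : ℝ)) / ((p : ℝ) + (ℓ : ℝ))) /
              Real.Gamma ((((b₀ + w₀ : ℕ) : ℝ) + (p : ℝ) + (j : ℝ)) / ((p : ℝ) + (ℓ : ℝ))))) :=
  young_polya_urn_rescaled_moments_limit_general p ℓ b₀ w₀ hp hb r
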